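/- A non-empty regular language L with p positive atoms has a trim reduced atomic NFA with 2^p − 1 states if and only if some left quotient K_i of L equals the union A_0 ∪ ⋯ ∪ A_{p−1} of all positive atoms of L. -/

import Mathlib

/-! Basic definitions: left quotients, atoms, and operations on finite automata. -/

/-- The left quotient of a language `L` by a word `w`: `w⁻¹L = {x | w ++ x ∈ L}`. -/
def leftQuot {α : Type} (L : Language α) (w : List α) : Language α := {x | w ++ x ∈ L}

/-- The set of all left quotients of `L`. -/
def quots {α : Type} (L : Language α) : Set (Language α) := {K | ∃ w : List α, K = leftQuot L w}

/-- `A` is an atom of `L`: a non-empty intersection `K̃_0 ∩ ⋯ ∩ K̃_{n−1}` where each `K̃_i` is a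
quotient `K_i` of `L` or its complement (`S` is the set of uncomplemented quotients, so a word is
in the intersection iff it belongs exactly to the quotients in `S`). -/
def IsAtomOf {α : Type} (L A : Language α) : Prop :=
  (∃ x, x ∈ A) ∧ ∃ S : Set (Language α), S ⊆ quots L ∧
    A = {x | ∀ K ∈ quots L, (x ∈ K ↔ K ∈ S)}

/-- A positive atom: at least one term of its defining intersection is uncomplemented,
equivalently the atom is contained in some quotient of `L`. -/
def IsPositiveAtomOf {α : Type} (L A : Language α) : Prop :=
  IsAtomOf L A ∧ ∃ K ∈ quots L, ∀ x ∈ A, x ∈ K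

namespace NFA

/-- The right language of a state `q`: words accepted starting from `q`. -/
def rightLang {α σ : Type} (M : NFA α σ) (q : σ) : Language α :=
  {w | ∃ p ∈ M.accept, p ∈ M.evalFrom {q} w}

/-- The left language of a state `q`: words leading from the initial states to `q`. -/
def leftLang {α σ : Type} (M : NFA α σ) (q : σ) : Language α :=
  {w | q ∈ M.eval w}

/-- An NFA is trim if every state has a non-empty left language and right language. -/
def IsTrim {α σ : Type} (M : NFA α σ) : Prop :=
  ∀ q, (∃ w, w ∈ M.leftLang q) ∧ (∃ w, w ∈ M.rightLang q)

/-- An NFA is reduced if distinct states have distinct right languages. -/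
def IsReduced {α σ : Type} (M : NFA α σ) : Prop :=
  ∀ q p, M.rightLang q = M.rightLang p → q = p

/-- An NFA is atomic if the right language of every state is a union of positive atoms of the
accepted language. -/
def IsAtomic {α σ : Type} (M : NFA α σ) : Prop :=
  ∀ q, ∃ 𝒜 : Set (Language α), (∀ A ∈ 𝒜, IsPositiveAtomOf M.accepts A) ∧
    M.rightLang q = {w | ∃ A ∈ 𝒜, w ∈ A}

/-- Reversal of an NFA: interchange initial and final states and reverse all transitions. -/
def rev {α σ : Type} (M : NFA α σ) : NFA α σ :=
  ⟨fun q a => {p | q ∈ M.step p a}, M.accept, M.start⟩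

/-- States of the determinization of an NFA: the subsets of states reachable from the initial
subset. -/
def detStates {α σ : Type} (M : NFA α σ) : Type := {S : Set σ // ∃ w, M.eval w = S}

instance {α σ : Type} [Finite σ] (M : NFA α σ) : Finite M.detStates :=
  Subtype.finite

/-- Determinization of an NFA by the subset construction, keeping only the subsets reachable
from the initial subset. -/
def det {α σ : Type} (M : NFA α σ) : DFA α M.detStates where
  step S a := ⟨M.stepSet S.1 a, by
    obtain ⟨w, hw⟩ := S.2
    exact ⟨w ++ [a], by rw [NFA.eval_append_singleton, hw]⟩⟩
  start := ⟨M.start, [], rfl⟩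
  accept := {S | ∃ p ∈ M.accept, p ∈ S.1}

end NFA

/-- Reversal of a DFA, yielding an NFA. -/
def DFA.rev {α σ : Type} (M : DFA α σ) : NFA α σ :=
  ⟨fun q a => {p | M.step p a = q}, M.accept, {M.start}⟩

/-- A DFA is minimal if no DFA accepting the same language has fewer states. -/
def DFA.IsMinimal {α σ : Type} (M : DFA α σ) : Prop :=
  ∀ (σ' : Type) (_ : Finite σ') (M' : DFA α σ'), M'.accepts = M.accepts →
    Nat.card σ ≤ Nat.card σ'

/-! If the right language of every state is a union of positive atoms, a state is determined
(by reducedness) by the non-empty set of positive atoms making up its right language. With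
`2^p − 1` states every non-empty set occurs, so some state `q` has the union of all positive atoms
as right language; this union contains every quotient, and is contained in `v⁻¹L` for any `v`
reaching `q`.

Conversely, take the non-empty sets `X` of positive atoms as states, with `X →a Y` whenever
`a · ⋃Y ⊆ ⋃X`. Since quotients are unions of atoms and atoms are compatible with left
concatenation, the right language of `X` is `⋃X` and `X` is reached by `w` iff `⋃X ⊆ w⁻¹L`. If
some `v⁻¹L` is the union of all positive atoms, `v` reaches every state. -/

section Atoms

variable {α : Type} {L : Language α}

theorem mem_leftQuot {w x : List α} : x ∈ leftQuot L w ↔ w ++ x ∈ L := Iff.rfl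

theorem mem_leftQuot_append_singleton {w x : List α} {a : α} :
    x ∈ leftQuot L (w ++ [a]) ↔ a :: x ∈ leftQuot L w := by
  simp [mem_leftQuot]

def atomOf (L : Language α) (x : List α) : Language α :=
  {y | ∀ v, v ++ y ∈ L ↔ v ++ x ∈ L}

theorem mem_atomOf_self (x : List α) : x ∈ atomOf L x := fun _ => Iff.rfl

theorem atomOf_eq_of_mem {x y : List α} (h : y ∈ atomOf L x) : atomOf L y = atomOf L x :=
  Set.ext fun _ => forall_congr' fun v => by rw [h v]

theorem append_mem_atomOf {x y : List α} (h : y ∈ atomOf L x) (w : List α) :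
    w ++ y ∈ atomOf L (w ++ x) := fun v => by
  simpa only [← List.append_assoc] using h (v ++ w)

theorem forall_mem_atomOf_append_mem_iff {v x : List α} :
    (∀ y ∈ atomOf L x, v ++ y ∈ L) ↔ v ++ x ∈ L :=
  ⟨fun h => h x (mem_atomOf_self x), fun hx _ hy => (hy v).2 hx⟩

theorem isAtomOf_atomOf (x : List α) : IsAtomOf L (atomOf L x) := by
  refine ⟨⟨x, mem_atomOf_self x⟩, {K | K ∈ quots L ∧ x ∈ K}, fun K hK => hK.1, ?_⟩
  ext y
  constructor
  · rintro h K ⟨v, rfl⟩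
    exact (h v).trans ⟨fun hx => ⟨⟨v, rfl⟩, hx⟩, And.right⟩
  · intro h v
    exact (h _ ⟨v, rfl⟩).trans ⟨And.right, fun hx => ⟨⟨v, rfl⟩, hx⟩⟩

theorem IsAtomOf.eq_atomOf {A : Language α} (hA : IsAtomOf L A) {x : List α} (hx : x ∈ A) :
    A = atomOf L x := by
  obtain ⟨-, S, -, rfl⟩ := hA
  ext y
  constructor
  · intro h v
    exact (h _ ⟨v, rfl⟩).trans (hx _ ⟨v, rfl⟩).symm
  · rintro h K ⟨v, rfl⟩
    exact (h v).trans (hx _ ⟨v, rfl⟩)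

theorem isPositiveAtomOf_atomOf {v x : List α} (h : v ++ x ∈ L) :
    IsPositiveAtomOf L (atomOf L x) :=
  ⟨isAtomOf_atomOf x, leftQuot L v, ⟨v, rfl⟩, fun _ hy => (hy v).2 h⟩

theorem IsPositiveAtomOf.exists_append_mem {A : Language α} (hA : IsPositiveAtomOf L A)
    {x : List α} (hx : x ∈ A) : ∃ v, v ++ x ∈ L := by
  obtain ⟨-, K, ⟨v, rfl⟩, hAK⟩ := hA
  exact ⟨v, hAK x hx⟩

variable (L) in
abbrev PositiveAtom : Type := {A : Language α // IsPositiveAtomOf L A}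

theorem finite_positiveAtom (hL : L.IsRegular) : Finite (PositiveAtom L) := by
  have := hL.finite_range_leftQuotient.to_subtype
  refine Finite.of_injective (fun (A : PositiveAtom L) (K : Set.range L.leftQuotient) =>
    ∀ x ∈ A.1, x ∈ K.1) ?_
  rintro ⟨A, hA⟩ ⟨B, hB⟩ hAB
  obtain ⟨x, hx⟩ := hA.1.1
  obtain ⟨y, hy⟩ := hB.1.1
  rw [Subtype.mk.injEq, hA.1.eq_atomOf hx, hB.1.eq_atomOf hy]
  refine atomOf_eq_of_mem fun v => ?_
  have := congrFun hAB ⟨L.leftQuotient v, v, rfl⟩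
  simp only [hA.1.eq_atomOf hx, hB.1.eq_atomOf hy] at this
  exact (forall_mem_atomOf_append_mem_iff.symm.trans (iff_of_eq this)).trans
    forall_mem_atomOf_append_mem_iff

def atomUnion (X : Set (PositiveAtom L)) : Language α :=
  {w | ∃ A ∈ X, w ∈ A.1}

def atomsIn (L K : Language α) : Set (PositiveAtom L) :=
  {A | ∀ x ∈ A.1, x ∈ K}

theorem atomUnion_univ :
    atomUnion (Set.univ : Set (PositiveAtom L)) =
      {w | ∃ A : Language α, IsPositiveAtomOf L A ∧ w ∈ A} := by
  ext w
  simp [atomUnion]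

theorem atomUnion_injective :
    Function.Injective (atomUnion : Set (PositiveAtom L) → Language α) := by
  have key : ∀ X Y : Set (PositiveAtom L), atomUnion X = atomUnion Y → X ⊆ Y := by
    intro X Y hXY A hA
    obtain ⟨x, hx⟩ := A.2.1.1
    obtain ⟨B, hB, hxB⟩ : x ∈ atomUnion Y := hXY ▸ ⟨A, hA, hx⟩
    rwa [Subtype.ext ((A.2.1.eq_atomOf hx).trans (B.2.1.eq_atomOf hxB).symm)]
  exact fun X Y h => Set.Subset.antisymm (key X Y h) (key Y X h.symm)

theorem append_mem_atomUnion_of_mem_atomOf {X : Set (PositiveAtom L)} {w x y : List α}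
    (hx : w ++ x ∈ atomUnion X) (hy : y ∈ atomOf L x) : w ++ y ∈ atomUnion X := by
  obtain ⟨A, hA, hxA⟩ := hx
  refine ⟨A, hA, ?_⟩
  rw [A.2.1.eq_atomOf hxA]
  exact append_mem_atomOf hy w

theorem isPositiveAtomOf_atomOf_of_append_mem_atomUnion {X : Set (PositiveAtom L)}
    {w x : List α} (hx : w ++ x ∈ atomUnion X) : IsPositiveAtomOf L (atomOf L x) := by
  obtain ⟨A, -, hxA⟩ := hx
  obtain ⟨v, hv⟩ := A.2.exists_append_mem hxA
  exact isPositiveAtomOf_atomOf (v := v ++ w) (by rwa [List.append_assoc])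

theorem atomUnion_atomsIn_subset (K : Language α) {x : List α}
    (hx : x ∈ atomUnion (atomsIn L K)) : x ∈ K := by
  obtain ⟨A, hA, hxA⟩ := hx
  exact hA x hxA

theorem mem_atomUnion_atomsIn_leftQuot {w x : List α} (hx : x ∈ leftQuot L w) :
    x ∈ atomUnion (atomsIn L (leftQuot L w)) :=
  ⟨⟨atomOf L x, isPositiveAtomOf_atomOf hx⟩, fun _ hy => (hy w).2 hx, mem_atomOf_self x⟩

theorem atomUnion_atomsIn_of_forall_isPositiveAtomOf {𝒜 : Set (Language α)}
    (h𝒜 : ∀ A ∈ 𝒜, IsPositiveAtomOf L A) :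
    atomUnion (atomsIn L {w | ∃ A ∈ 𝒜, w ∈ A}) = {w | ∃ A ∈ 𝒜, w ∈ A} := by
  refine Set.Subset.antisymm (fun x => atomUnion_atomsIn_subset _) ?_
  rintro x ⟨A, hA, hxA⟩
  exact ⟨⟨A, h𝒜 A hA⟩, fun y hy => ⟨A, hA, hy⟩, hxA⟩

end Atoms

theorem Nat.card_nonempty_set (P : Type) [Finite P] :
    Nat.card {X : Set P // X.Nonempty} = 2 ^ Nat.card P - 1 := by
  have := Fintype.ofFinite P
  classical
  rw [Nat.card_eq_fintype_card, Nat.card_eq_fintype_card]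
  have h1 : Fintype.card {X : Set P // X.Nonempty} = Fintype.card {X : Set P // ¬ X = ∅} :=
    Fintype.card_congr (Equiv.subtypeEquivRight fun X => by
      simp [Set.nonempty_iff_ne_empty])
  rw [h1, Fintype.card_subtype_compl, Fintype.card_subtype_eq, Fintype.card_set]

namespace NFA

variable {α σ : Type} (M : NFA α σ)

theorem nil_mem_rightLang {q : σ} : [] ∈ M.rightLang q ↔ q ∈ M.accept :=
  (M.nil_mem_acceptsFrom).trans (by simp)

theorem cons_mem_rightLang {q : σ} {a : α} {x : List α} :
    a :: x ∈ M.rightLang q ↔ ∃ p ∈ M.step q a, x ∈ M.rightLang p := by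
  change a :: x ∈ M.acceptsFrom {q} ↔ ∃ p ∈ M.step q a, ∃ s ∈ M.accept, s ∈ M.evalFrom {p} x
  rw [cons_mem_acceptsFrom, stepSet_singleton]
  constructor
  · rintro ⟨s, hs, hsx⟩
    obtain ⟨p, hp, hpx⟩ := mem_evalFrom_iff_exists.1 hsx
    exact ⟨p, hp, s, hs, hpx⟩
  · rintro ⟨p, hp, s, hs, hpx⟩
    exact ⟨s, hs, mem_evalFrom_iff_exists.2 ⟨p, hp, hpx⟩⟩

theorem append_mem_accepts {q : σ} {v w : List α} (hv : v ∈ M.leftLang q)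
    (hw : w ∈ M.rightLang q) : v ++ w ∈ M.accepts := by
  obtain ⟨p, hp, hpw⟩ := hw
  exact ⟨p, hp, by rw [eval, evalFrom_append]; exact mem_evalFrom_iff_exists.2 ⟨q, hv, hpw⟩⟩

variable {M}

theorem IsAtomic.atomUnion_atomsIn_rightLang (hM : M.IsAtomic) (q : σ) :
    atomUnion (atomsIn M.accepts (M.rightLang q)) = M.rightLang q := by
  obtain ⟨𝒜, h𝒜, hq⟩ := hM q
  rw [hq]
  exact atomUnion_atomsIn_of_forall_isPositiveAtomOf h𝒜

theorem exists_rightLang_eq_atomUnion_univ [Finite σ] [Finite (PositiveAtom M.accepts)]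
    [Nonempty (PositiveAtom M.accepts)]
    (hcard : Nat.card σ = 2 ^ Nat.card (PositiveAtom M.accepts) - 1)
    (hright : ∀ q, ∃ w, w ∈ M.rightLang q) (hred : M.IsReduced) (hatom : M.IsAtomic) :
    ∃ q, M.rightLang q = atomUnion (Set.univ : Set (PositiveAtom M.accepts)) := by
  have hne (q : σ) : (atomsIn M.accepts (M.rightLang q)).Nonempty := by
    obtain ⟨w, hw⟩ := hright q
    rw [← hatom.atomUnion_atomsIn_rightLang q] at hw
    obtain ⟨A, hA, -⟩ := hw
    exact ⟨A, hA⟩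
  let f (q : σ) : {X : Set (PositiveAtom M.accepts) // X.Nonempty} := ⟨_, hne q⟩
  have hf : Function.Injective f := fun q p h => hred q p <| by
    rw [← hatom.atomUnion_atomsIn_rightLang q, ← hatom.atomUnion_atomsIn_rightLang p]
    exact congrArg (fun X => atomUnion X.1) h
  obtain ⟨q, hq⟩ := (hf.bijective_of_nat_card_le (by rw [Nat.card_nonempty_set, hcard])).2
    ⟨Set.univ, Set.univ_nonempty⟩
  exact ⟨q, (hatom.atomUnion_atomsIn_rightLang q).symm.trans
    (congrArg (fun X => atomUnion X.1) hq)⟩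

end NFA

section MaxAtomicNFA

variable {α : Type} {L : Language α}

variable (L) in
def maxAtomicNFA : NFA α {X : Set (PositiveAtom L) // X.Nonempty} where
  step X a := {Y | ∀ u ∈ atomUnion Y.1, a :: u ∈ atomUnion X.1}
  start := {X | ∀ u ∈ atomUnion X.1, u ∈ L}
  accept := {X | [] ∈ atomUnion X.1}

theorem maxAtomicNFA_rightLang (X : {X : Set (PositiveAtom L) // X.Nonempty}) :
    (maxAtomicNFA L).rightLang X = atomUnion X.1 := by
  ext w
  induction w generalizing X with
  | nil => exact NFA.nil_mem_rightLang _
  | cons a t ih =>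
    rw [NFA.cons_mem_rightLang]
    constructor
    · rintro ⟨Y, hY, htY⟩
      exact hY t ((ih Y).1 htY)
    · intro hat
      have hpos := isPositiveAtomOf_atomOf_of_append_mem_atomUnion (w := [a]) hat
      refine ⟨⟨{⟨atomOf L t, hpos⟩}, Set.singleton_nonempty _⟩, ?_,
        (ih _).2 ⟨_, rfl, mem_atomOf_self t⟩⟩
      rintro u ⟨_, rfl, hu⟩
      exact append_mem_atomUnion_of_mem_atomOf (w := [a]) hat hu

theorem mem_maxAtomicNFA_eval {X : {X : Set (PositiveAtom L) // X.Nonempty}} {w : List α} :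
    X ∈ (maxAtomicNFA L).eval w ↔ ∀ u ∈ atomUnion X.1, u ∈ leftQuot L w := by
  induction w using List.reverseRecOn generalizing X with
  | nil => rfl
  | append_singleton w a ih =>
    rw [NFA.eval_append_singleton, NFA.mem_stepSet]
    simp only [mem_leftQuot_append_singleton]
    constructor
    · rintro ⟨Z, hZ, hXZ⟩ u hu
      exact ih.1 hZ _ (hXZ u hu)
    · intro hX
      have hXZ : ∀ u ∈ atomUnion X.1, a :: u ∈ atomUnion (atomsIn L (leftQuot L w)) :=
        fun u hu => mem_atomUnion_atomsIn_leftQuot (hX u hu)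
      obtain ⟨A, hA⟩ := X.2
      obtain ⟨u₀, hu₀⟩ := A.2.1.1
      obtain ⟨B, hB, -⟩ := hXZ u₀ ⟨A, hA, hu₀⟩
      exact ⟨⟨_, B, hB⟩, ih.2 fun _ => atomUnion_atomsIn_subset _, hXZ⟩

theorem maxAtomicNFA_accepts : (maxAtomicNFA L).accepts = L := by
  ext w
  constructor
  · rintro ⟨X, hX, hXw⟩
    simpa [mem_leftQuot] using mem_maxAtomicNFA_eval.1 hXw [] hX
  · intro hw
    have hnil : [] ∈ atomUnion (atomsIn L (leftQuot L w)) :=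
      mem_atomUnion_atomsIn_leftQuot (by simpa [mem_leftQuot])
    have ⟨B, hB, _⟩ := hnil
    exact ⟨⟨_, B, hB⟩, hnil, mem_maxAtomicNFA_eval.2 fun _ => atomUnion_atomsIn_subset _⟩

theorem maxAtomicNFA_isTrim {v : List α}
    (hv : leftQuot L v = atomUnion (Set.univ : Set (PositiveAtom L))) :
    (maxAtomicNFA L).IsTrim := by
  rintro ⟨X, A, hA⟩
  obtain ⟨x, hx⟩ := A.2.1.1
  refine ⟨⟨v, mem_maxAtomicNFA_eval.2 ?_⟩, ⟨x, (maxAtomicNFA_rightLang _).symm ▸ ⟨A, hA, hx⟩⟩⟩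
  rintro u ⟨B, -, huB⟩
  exact hv ▸ ⟨B, trivial, huB⟩

theorem maxAtomicNFA_isReduced : (maxAtomicNFA L).IsReduced := fun X Y h =>
  Subtype.ext (atomUnion_injective (by rwa [maxAtomicNFA_rightLang, maxAtomicNFA_rightLang] at h))

theorem maxAtomicNFA_isAtomic : (maxAtomicNFA L).IsAtomic := by
  intro X
  refine ⟨Subtype.val '' X.1, ?_, ?_⟩
  · rintro _ ⟨A, -, rfl⟩
    rw [maxAtomicNFA_accepts]
    exact A.2
  · rw [maxAtomicNFA_rightLang]
    ext w
    simp [atomUnion]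

end MaxAtomicNFA

theorem max_size_atomic_nfa_iff_general {α : Type} {L : Language α} (hL : L.IsRegular)
    (hne : ∃ w, w ∈ L) :
    (∃ (σ : Type) (_ : Finite σ) (M : NFA α σ),
        Nat.card σ = 2 ^ Nat.card {A : Language α // IsPositiveAtomOf L A} - 1 ∧
        M.accepts = L ∧ M.IsTrim ∧ M.IsReduced ∧ M.IsAtomic) ↔
      ∃ K ∈ quots L, K = {w | ∃ A : Language α, IsPositiveAtomOf L A ∧ w ∈ A} := by
  have := finite_positiveAtom hL
  rw [← atomUnion_univ]
  constructor
  · rintro ⟨σ, _, M, hcard, rfl, htrim, hred, hatom⟩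
    obtain ⟨w, hw⟩ := hne
    have : Nonempty (PositiveAtom M.accepts) := ⟨⟨_, isPositiveAtomOf_atomOf (v := []) hw⟩⟩
    obtain ⟨q, hq⟩ := M.exists_rightLang_eq_atomUnion_univ hcard (fun q => (htrim q).2) hred hatom
    obtain ⟨v, hv⟩ := (htrim q).1
    refine ⟨_, ⟨v, rfl⟩, Set.Subset.antisymm (fun x hx => ?_) fun x hx => ?_⟩
    · obtain ⟨A, -, hxA⟩ := mem_atomUnion_atomsIn_leftQuot hx
      exact ⟨A, trivial, hxA⟩
    · exact M.append_mem_accepts hv (hq ▸ hx)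
  · rintro ⟨_, ⟨v, rfl⟩, hv⟩
    exact ⟨_, inferInstance, maxAtomicNFA L, Nat.card_nonempty_set _, maxAtomicNFA_accepts,
      maxAtomicNFA_isTrim hv, maxAtomicNFA_isReduced, maxAtomicNFA_isAtomic⟩

/-- A non-empty regular language `L` with `p` positive atoms has a trim
reduced atomic NFA with `2^p − 1` states iff some left quotient of `L` equals the union of all
positive atoms of `L`. -/
theorem max_size_atomic_nfa_iff {α : Type} [Finite α] {L : Language α} (hL : L.IsRegular)
    (hne : ∃ w, w ∈ L) :
    (∃ (σ : Type) (_ : Finite σ) (M : NFA α σ),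
        Nat.card σ = 2 ^ Nat.card {A : Language α // IsPositiveAtomOf L A} - 1 ∧
        M.accepts = L ∧ M.IsTrim ∧ M.IsReduced ∧ M.IsAtomic) ↔
      ∃ K ∈ quots L, K = {w | ∃ A : Language α, IsPositiveAtomOf L A ∧ w ∈ A} :=
  max_size_atomic_nfa_iff_general hL hne
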